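/- Let 0 < α < 1, let {a_j}_{j∈ℤ} be any increasing sequence of positive numbers, and let {v_j} be a bounded sequence with |v_j| ≤ V for all j. For N = (N₁, N₂) with N₁ < N₂, define K_N^α(s) = (1/(4^α Γ(α))) Σ_{j=N₁}^{N₂} v_j (a_{j+1}^{2α} e^{-a_{j+1}²/(4s)} − a_j^{2α} e^{-a_j²/(4s)}) / s^{1+α} for s > 0. Then there is a constant C depending only on α and V (not on N or the sequence {a_j}) such that |K_N^α(s)| ≤ C/s for all s > 0. -/

import Mathlib

open Real Finset

/-!
Writing `τ = 4s` and `g(t) = t^α e^{-t/τ}`, the `j`-th summand of the kernel is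
`v_j (g(a_{j+1}²) - g(a_j²)) / (4^α Γ(α) s^{1+α})`. The profile `g` increases on `[0, ατ]` and
decreases afterwards, so along the increasing sequence `a_j²` its total variation is at most twice
its maximum `g(ατ) = (4αs)^α e^{-α}`, whatever the sequence. Hence the sum is bounded by
`2V (4αs)^α e^{-α}`, and dividing by `4^α Γ(α) s^{1+α}` leaves `2V α^α e^{-α} / (Γ(α) s)`.
-/

theorem Int.sum_Icc_sub {M : Type*} [AddCommGroup M] (f : ℤ → M) {m n : ℤ} (h : m ≤ n + 1) :
    ∑ j ∈ Icc m n, (f (j + 1) - f j) = f (n + 1) - f m := by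
  induction n, (show m - 1 ≤ n by omega) using Int.leInduction with
  | base => simp
  | succ n hn ih =>
    rw [← insert_Icc_right_eq_Icc_add_one (by omega), sum_insert (by simp), ih (by omega)]
    abel

theorem sum_abs_sub_le_of_eq_add {f u d : ℤ → ℝ} (hf : f = u + d) (hu : Monotone u)
    (hd : Antitone d) {m n : ℤ} (h : m ≤ n + 1) :
    ∑ j ∈ Icc m n, |f (j + 1) - f j| ≤ (u (n + 1) - u m) + (d m - d (n + 1)) := by
  calc ∑ j ∈ Icc m n, |f (j + 1) - f j|
      ≤ ∑ j ∈ Icc m n, ((u (j + 1) - u j) - (d (j + 1) - d j)) := by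
        refine sum_le_sum fun j _ => ?_
        have hu_step := hu (by omega : j ≤ j + 1)
        have hd_step := hd (by omega : j ≤ j + 1)
        simp only [hf, Pi.add_apply, abs_le]
        constructor <;> linarith
    _ = (u (n + 1) - u m) + (d m - d (n + 1)) := by
        rw [sum_sub_distrib, Int.sum_Icc_sub u h, Int.sum_Icc_sub d h]; ring

theorem sum_abs_sub_comp_le_two_mul {g : ℝ → ℝ} {c : ℝ} (hc : 0 ≤ c)
    (hg : ∀ t, 0 ≤ t → 0 ≤ g t) (hmono : MonotoneOn g (Set.Icc 0 c))
    (hanti : AntitoneOn g (Set.Ici c)) {b : ℤ → ℝ} (hb0 : ∀ j, 0 ≤ b j) (hb : Monotone b)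
    {m n : ℤ} (h : m ≤ n + 1) :
    ∑ j ∈ Icc m n, |g (b (j + 1)) - g (b j)| ≤ 2 * g c := by
  have hmin : ∀ j, min (b j) c ∈ Set.Icc 0 c := fun j => ⟨le_min (hb0 j) hc, min_le_right _ _⟩
  have hmax : ∀ j, max (b j) c ∈ Set.Ici c := fun j => Set.mem_Ici.2 (le_max_right _ _)
  set u : ℤ → ℝ := fun j => g (min (b j) c)
  set d : ℤ → ℝ := fun j => g (max (b j) c) - g c
  have hsplit : (fun j => g (b j)) = u + d := by
    funext j
    rcases le_total (b j) c with hj | hj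
    · simp [u, d, min_eq_left hj, max_eq_right hj]
    · simp [u, d, min_eq_right hj, max_eq_left hj]
  have hu : Monotone u := fun i j hij => hmono (hmin i) (hmin j) (min_le_min_right c (hb hij))
  have hd : Antitone d := fun i j hij =>
    sub_le_sub_right (hanti (hmax i) (hmax j) (max_le_max_right c (hb hij))) _
  have hu_top : u (n + 1) ≤ g c := hmono (hmin _) ⟨hc, le_rfl⟩ (min_le_right _ _)
  have hu_bot : 0 ≤ u m := hg _ (hmin m).1
  have hd_top : d m ≤ 0 := sub_nonpos.2 (hanti Set.self_mem_Ici (hmax m) (le_max_right _ _))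
  have hd_bot : -g c ≤ d (n + 1) := by
    simp only [d]; linarith [hg _ (hc.trans (hmax (n + 1)))]
  linarith [sum_abs_sub_le_of_eq_add hsplit hu hd h]

/-- The hypothesis holds for `p ≤ q` in `[ατ, ∞)` and for `q ≤ p` in `[0, ατ]`. -/
theorem rpow_mul_exp_neg_div_le {α τ p q : ℝ} (hα : 0 ≤ α) (hτ : 0 < τ) (hp : 0 < p)
    (hq : 0 < q) (h : α * τ * (q - p) ≤ p * (q - p)) :
    q ^ α * exp (-q / τ) ≤ p ^ α * exp (-p / τ) := by
  rw [rpow_def_of_pos hp, rpow_def_of_pos hq, ← exp_add, ← exp_add, exp_le_exp]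
  have hlog : log q - log p ≤ (q - p) / p := by
    have h := log_le_sub_one_of_pos (div_pos hq hp)
    rw [log_div hq.ne' hp.ne'] at h
    rwa [sub_div, div_self hp.ne']
  have hslope : α * ((q - p) / p) ≤ (q - p) / τ := by
    rw [mul_div_assoc', div_le_div_iff₀ hp hτ]
    linarith
  rw [neg_div, neg_div]
  linarith [mul_le_mul_of_nonneg_left hlog hα, sub_div q p τ]

theorem monotoneOn_rpow_mul_exp_neg_div {α τ : ℝ} (hα : 0 < α) (hτ : 0 < τ) :
    MonotoneOn (fun t => t ^ α * exp (-t / τ)) (Set.Icc 0 (α * τ)) := by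
  intro x hx y hy hxy
  rcases hx.1.eq_or_lt with rfl | hx0
  · simp only [zero_rpow hα.ne', zero_mul]
    exact mul_nonneg (rpow_nonneg hy.1 _) (exp_pos _).le
  · exact rpow_mul_exp_neg_div_le hα.le hτ (hx0.trans_le hxy) hx0
      (by nlinarith [mul_nonneg (sub_nonneg.2 hy.2) (sub_nonneg.2 hxy)])

theorem antitoneOn_rpow_mul_exp_neg_div {α τ : ℝ} (hα : 0 < α) (hτ : 0 < τ) :
    AntitoneOn (fun t => t ^ α * exp (-t / τ)) (Set.Ici (α * τ)) := by
  intro x hx y hy hxy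
  have hx0 : 0 < x := (mul_pos hα hτ).trans_le hx
  exact rpow_mul_exp_neg_div_le hα.le hτ hx0 (hx0.trans_le hxy)
    (by nlinarith [mul_nonneg (sub_nonneg.2 (Set.mem_Ici.1 hx)) (sub_nonneg.2 hxy)])

theorem abs_sum_mul_le_mul_sum_abs {ι : Type*} (s : Finset ι) (v x : ι → ℝ) {V : ℝ}
    (hv : ∀ j ∈ s, |v j| ≤ V) : |∑ j ∈ s, v j * x j| ≤ V * ∑ j ∈ s, |x j| := by
  rw [mul_sum]
  refine (abs_sum_le_sum_abs _ _).trans (sum_le_sum fun j hj => ?_)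
  rw [abs_mul]
  exact mul_le_mul_of_nonneg_right (hv j hj) (abs_nonneg _)

theorem stmt_6 (α V : ℝ) (hα0 : 0 < α) (hV : 0 < V) :
    ∃ C > 0, ∀ (a v : ℤ → ℝ), (∀ j, 0 < a j) → StrictMono a →
      (∀ j, |v j| ≤ V) → ∀ N₁ N₂ : ℤ, N₁ < N₂ → ∀ s > (0:ℝ),
      |(1 / (4 ^ α * Real.Gamma α)) *
          ∑ j ∈ Finset.Icc N₁ N₂,
            v j * ((a (j + 1)) ^ (2 * α) * Real.exp (-(a (j + 1)) ^ 2 / (4 * s)) -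
                   (a j) ^ (2 * α) * Real.exp (-(a j) ^ 2 / (4 * s))) / s ^ (1 + α)|
        ≤ C / s := by
  refine ⟨2 * V * α ^ α * exp (-α) / Gamma α, by positivity, ?_⟩
  intro a v ha hmono hv N₁ N₂ hN s hs
  set g : ℝ → ℝ := fun t => t ^ α * exp (-t / (4 * s))
  have hterm : ∀ j, a j ^ (2 * α) * exp (-a j ^ 2 / (4 * s)) = g (a j ^ 2) := fun j => by
    simp only [g]
    rw [← rpow_natCast_mul (ha j).le]
    norm_num
  have hvar : ∑ j ∈ Icc N₁ N₂, |g (a (j + 1) ^ 2) - g (a j ^ 2)| ≤ 2 * g (α * (4 * s)) :=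
    sum_abs_sub_comp_le_two_mul (by positivity) (fun t ht => by positivity)
      (monotoneOn_rpow_mul_exp_neg_div hα0 (by positivity))
      (antitoneOn_rpow_mul_exp_neg_div hα0 (by positivity)) (fun j => sq_nonneg _)
      (fun i j hij => pow_le_pow_left₀ (ha i).le (hmono.monotone hij) 2) (by omega)
  have hpeak : g (α * (4 * s)) = 4 ^ α * α ^ α * s ^ α * exp (-α) := by
    simp only [g]
    rw [mul_rpow hα0.le (by positivity), mul_rpow (by norm_num) hs.le,
      show -(α * (4 * s)) / (4 * s) = -α by field_simp]
    ring
  have hpow : 0 < s ^ (1 + α) := by positivity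
  have hconst : 0 < 4 ^ α * Gamma α := by positivity
  calc _ = |∑ j ∈ Icc N₁ N₂, v j * (g (a (j + 1) ^ 2) - g (a j ^ 2))| /
        (4 ^ α * Gamma α * s ^ (1 + α)) := by
        simp_rw [hterm, ← sum_div]
        rw [abs_mul, abs_div, abs_div, abs_one, abs_of_pos hpow, abs_of_pos hconst]
        field_simp
    _ ≤ V * (2 * g (α * (4 * s))) / (4 ^ α * Gamma α * s ^ (1 + α)) := by
        gcongr
        exact (abs_sum_mul_le_mul_sum_abs _ _ _ fun j _ => hv j).trans
          (mul_le_mul_of_nonneg_left hvar hV.le)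
    _ = 2 * V * α ^ α * exp (-α) / Gamma α / s := by
        rw [hpeak, rpow_add hs, rpow_one]
        field_simp
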